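/- arXiv:2206.04159 — 3 statements merged into one kernel-verified Lean document; each statement's English description precedes it below -/
import Mathlib

section
/- Let ρ > 0 and let v be holomorphic and bounded on the strip S_ρ = {z ∈ ℂ : |Im z| < ρ}, 1-periodic (v(z+1) = v(z)), and not identically constant. Then for any 0 < δ < ρ and any k ∈ ℕ there exists ε > 0, depending only on δ, k, and v, such that for every k-tuple (E₁, …, E_k) ∈ ℝ^k one has sup_{δ/2 ≤ y ≤ δ} min_{1 ≤ j ≤ k} inf_{x ∈ [0,1]} |v(x + i y) − E_j| > ε. -/
open Complex Set Filter Topology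

lemma mem_strip (ρ x y : ℝ) (hy : |y| < ρ) : (x + y*I : ℂ) ∈ {z : ℂ | |z.im| < ρ} := by
  simp [hy]

lemma strip_isOpen (ρ : ℝ) : IsOpen {z : ℂ | |z.im| < ρ} :=
  isOpen_lt (by fun_prop) continuous_const

lemma strip_preconnected (ρ : ℝ) : IsPreconnected {z : ℂ | |z.im| < ρ} := by
  have : Convex ℝ {z : ℂ | |z.im| < ρ} := by
    have : {z : ℂ | |z.im| < ρ} = Complex.imLm ⁻¹' (Set.Ioo (-ρ) ρ) := by
      ext z; simp [abs_lt]
    rw [this]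
    exact (convex_Ioo _ _).linear_preimage _
  exact this.isPreconnected

lemma key_lemma (ρ : ℝ) (hρ : 0 < ρ) (v : ℂ → ℂ)
    (hv_holo : DifferentiableOn ℂ v {z : ℂ | |z.im| < ρ})
    (hv_nonconst : ¬ ∃ c : ℂ, ∀ z : ℂ, |z.im| < ρ → v z = c)
    (δ : ℝ) (hδ0 : 0 < δ) (hδρ : δ < ρ) (k : ℕ) (E : Fin k → ℂ) :
    ∃ y ∈ Set.Icc (δ/2) δ, ∀ j, ∀ x ∈ Set.Icc (0:ℝ) 1, v (x + y*I) ≠ E j := by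
  set B : Fin k → Set ℝ :=
    fun j => {y ∈ Set.Icc (δ/2) δ | ∃ x ∈ Set.Icc (0:ℝ) 1, v (x + y*I) = E j} with hB
  by_cases hfin : ∀ j, (B j).Finite
  · -- the union is finite, Icc is infinite, pick y outside
    have hU : (⋃ j, B j).Finite := Set.finite_iUnion hfin
    have hI : (Set.Icc (δ/2) δ).Infinite := Set.Icc_infinite (by linarith)
    have : ¬ Set.Icc (δ/2) δ ⊆ ⋃ j, B j := by
      intro hsub
      exact (hU.subset hsub).not_infinite hI
    obtain ⟨y, hy, hyn⟩ := Set.not_subset.mp this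
    refine ⟨y, hy, fun j x hx hvx => hyn ?_⟩
    exact Set.mem_iUnion.mpr ⟨j, hy, x, hx, hvx⟩
  · push_neg at hfin
    obtain ⟨j, hj⟩ := hfin
    have hj' : (B j).Infinite := hj
    exfalso
    -- pick for each y ∈ B j a point x with v (x+yI) = E j
    have hex : ∀ y : B j, ∃ x ∈ Set.Icc (0:ℝ) 1, v (x + (y:ℝ)*I) = E j := fun y => y.2.2
    choose X hX1 hX2 using hex
    have : Infinite (B j) := Set.infinite_coe_iff.mpr hj
    set u : B j → ℂ := fun y => (X y : ℂ) + (y:ℝ)*I with hu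
    have huinj : Function.Injective u := by
      intro a b hab
      have : ((X a : ℂ) + (a:ℝ)*I).im = ((X b : ℂ) + (b:ℝ)*I).im := congrArg Complex.im hab
      simp only [add_im, ofReal_im, mul_im, ofReal_re, I_im, mul_one, I_re, mul_zero,
        add_zero, zero_add] at this
      exact Subtype.ext this
    set T : Set ℂ := {z : ℂ | z.re ∈ Set.Icc (0:ℝ) 1 ∧ z.im ∈ Set.Icc (δ/2) δ ∧ v z = E j} with hT
    have hTinf : T.Infinite := by
      apply Set.infinite_of_injective_forall_mem huinj
      intro y
      refine ⟨?_, ?_, ?_⟩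
      · simp only [hu, mem_Icc, add_re, ofReal_re, mul_re, ofReal_im, I_re, I_im,
          mul_zero, mul_one, zero_mul, sub_zero, zero_sub, add_zero, zero_add, neg_zero]
        simpa using hX1 y
      · simp only [hu, mem_Icc, add_im, ofReal_im, mul_im, ofReal_re, I_im, mul_one, I_re,
          mul_zero, add_zero, zero_add]
        exact y.2.1
      · exact hX2 y
    -- a sequence of distinct points of T in a compact set
    obtain ⟨w, hwT, hwinj⟩ : ∃ w : ℕ → ℂ, (∀ n, w n ∈ T) ∧ Function.Injective w := by
      obtain e := Set.Infinite.natEmbedding T hTinf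
      exact ⟨fun n => (e n : ℂ), fun n => (e n).2,
        fun a b hab => e.injective (Subtype.ext hab)⟩
    -- the points lie in a compact ball
    have hwball : ∀ n, w n ∈ Metric.closedBall (0:ℂ) (1 + δ) := by
      intro n
      rw [Metric.mem_closedBall, dist_zero_right]
      have h1 := (hwT n).1
      have h2 := (hwT n).2.1
      calc ‖w n‖ ≤ |(w n).re| + |(w n).im| := Complex.norm_le_abs_re_add_abs_im _
        _ ≤ 1 + δ := by
            rw [Set.mem_Icc] at h1 h2
            have : |(w n).re| ≤ 1 := abs_le.mpr ⟨by linarith [h1.1], h1.2⟩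
            have : |(w n).im| ≤ δ := abs_le.mpr ⟨by linarith [h2.1], h2.2⟩
            linarith [abs_le.mpr (⟨by linarith [h1.1], h1.2⟩ : -1 ≤ (w n).re ∧ (w n).re ≤ 1)]
    obtain ⟨z₀, _, φ, hφ, hφt⟩ := (isCompact_closedBall (0:ℂ) (1+δ)).tendsto_subseq hwball
    have hz₀im : z₀.im ∈ Set.Icc (δ/2) δ := by
      have : Tendsto (fun n => (w (φ n)).im) atTop (𝓝 z₀.im) :=
        (Complex.continuous_im.tendsto z₀).comp hφt
      exact isClosed_Icc.mem_of_tendsto this (Eventually.of_forall fun n => (hwT (φ n)).2.1)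
    have hz₀U : z₀ ∈ {z : ℂ | |z.im| < ρ} := by
      have h1 := hz₀im.1; have h2 := hz₀im.2
      simp only [Set.mem_setOf_eq, abs_lt]; constructor <;> nlinarith
    -- frequently equal near z₀
    have hfreq : ∃ᶠ z in 𝓝[≠] z₀, v z = E j := by
      have hev : ∀ᶠ n in atTop, w (φ n) ≠ z₀ := by
        have hfin : {n : ℕ | w (φ n) = z₀}.Finite := by
          apply Set.Subsingleton.finite
          intro a ha b hb
          exact hφ.injective (hwinj (ha.trans hb.symm))
        have := hfin.eventually_cofinite_notMem
        rw [Nat.cofinite_eq_atTop] at this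
        exact this
      have ht : Tendsto (fun n => w (φ n)) atTop (𝓝[≠] z₀) := by
        rw [tendsto_nhdsWithin_iff]
        exact ⟨hφt, hev⟩
      exact ht.frequently (Frequently.of_forall fun n => (hwT (φ n)).2.2)
    have heq := (hv_holo.analyticOnNhd (strip_isOpen ρ)).eqOn_of_preconnected_of_frequently_eq
      (analyticOnNhd_const) (strip_preconnected ρ) hz₀U hfreq
    exact hv_nonconst ⟨E j, fun z hz => heq hz⟩


/-- Lemma 1 of the paper: if `v` is bounded, holomorphic, 1-periodic and non-constant on the
strip `|Im z| < ρ`, then for any `0 < δ < ρ` and `k ∈ ℕ` there is `ε > 0`, depending only on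
`δ`, `k` and `v`, such that for every `k`-tuple `(E₁, …, E_k)` of real numbers one has
`sup_{δ/2 ≤ y ≤ δ} min_{1 ≤ j ≤ k} inf_{x ∈ [0,1]} |v(x + iy) − E_j| > ε`. -/
theorem exists_eps_line_bound
    (ρ : ℝ) (hρ : 0 < ρ) (v : ℂ → ℂ)
    (hv_holo : DifferentiableOn ℂ v {z : ℂ | |z.im| < ρ})
    (hv_bdd : ∃ C : ℝ, ∀ z ∈ {z : ℂ | |z.im| < ρ}, ‖v z‖ ≤ C)
    (hv_per : ∀ z : ℂ, |z.im| < ρ → v (z + 1) = v z)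
    (hv_nonconst : ¬ ∃ c : ℂ, ∀ z : ℂ, |z.im| < ρ → v z = c)
    (δ : ℝ) (hδ0 : 0 < δ) (hδρ : δ < ρ) (k : ℕ) :
    ∃ ε > 0, ∀ E : Fin k → ℝ,
      ∃ y ∈ Set.Icc (δ / 2) δ, ∀ j : Fin k,
        ε < ⨅ x : Set.Icc (0:ℝ) 1, ‖v ((x : ℝ) + y * I) - (E j : ℂ)‖ := by
  rcases Nat.eq_zero_or_pos k with hk | hk
  · subst hk
    exact ⟨1, one_pos, fun E => ⟨δ, ⟨by linarith, le_refl δ⟩, fun j => j.elim0⟩⟩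
  haveI : Nonempty (Fin k) := ⟨⟨0, hk⟩⟩
  haveI hIccne : Nonempty (Set.Icc (δ/2) δ) := ⟨⟨δ, by constructor <;> linarith⟩⟩
  obtain ⟨C₀, hC₀⟩ := hv_bdd
  set C : ℝ := max C₀ 0 with hC
  have hC0 : 0 ≤ C := le_max_right _ _
  have hCb : ∀ z ∈ {z : ℂ | |z.im| < ρ}, ‖v z‖ ≤ C :=
    fun z hz => (hC₀ z hz).trans (le_max_left _ _)
  have hyρ : ∀ y ∈ Set.Icc (δ/2) δ, |y| < ρ := by
    intro y hy
    rw [Set.mem_Icc] at hy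
    rw [abs_lt]; constructor <;> nlinarith [hy.1, hy.2]
  -- the inner infimum
  set φ : ℝ → ℝ → ℝ :=
    fun c y => ⨅ x : Set.Icc (0:ℝ) 1, ‖v ((x:ℝ) + y * I) - (c:ℂ)‖ with hφ
  have hbdd : ∀ (c : ℝ) (y : ℝ), BddBelow (Set.range fun x : Set.Icc (0:ℝ) 1 =>
      ‖v ((x:ℝ) + y * I) - (c:ℂ)‖) := by
    intro c y
    exact ⟨0, fun t ⟨x, hx⟩ => hx ▸ (norm_nonneg _)⟩
  have hφ_nonneg : ∀ c y, 0 ≤ φ c y :=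
    fun c y => Real.iInf_nonneg fun x => norm_nonneg _
  have hφ_le : ∀ c y (x : Set.Icc (0:ℝ) 1),
      φ c y ≤ ‖v ((x:ℝ) + y * I) - (c:ℂ)‖ :=
    fun c y x => ciInf_le (hbdd c y) x
  have hφ_lip : ∀ (c c' y : ℝ), φ c y ≤ φ c' y + |c - c'| := by
    intro c c' y
    have h1 : ∀ x : Set.Icc (0:ℝ) 1, φ c y - |c - c'| ≤
        ‖v ((x:ℝ) + y * I) - (c':ℂ)‖ := by
      intro x
      have h2 := hφ_le c y x
      have h3 : ‖v ((x:ℝ) + y * I) - (c:ℂ)‖ ≤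
          ‖v ((x:ℝ) + y * I) - (c':ℂ)‖ + |c - c'| := by
        have := norm_sub_le_norm_sub_add_norm_sub (v ((x:ℝ) + y * I) - (c:ℂ) + ((c:ℂ) - c')) ((c:ℂ) - c') 0
        calc ‖v ((x:ℝ) + y * I) - (c:ℂ)‖
            = ‖(v ((x:ℝ) + y * I) - (c':ℂ)) - ((c:ℂ) - (c':ℂ))‖ := by ring_nf
          _ ≤ ‖v ((x:ℝ) + y * I) - (c':ℂ)‖ + ‖(c:ℂ) - (c':ℂ)‖ := by
              exact (norm_sub_le _ _)
          _ = ‖v ((x:ℝ) + y * I) - (c':ℂ)‖ + |c - c'| := by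
              rw [← Complex.ofReal_sub, Complex.norm_real, Real.norm_eq_abs]
      linarith
    have h4 : φ c y - |c - c'| ≤ φ c' y := le_ciInf h1
    linarith
  have hφ_lower : ∀ (c y : ℝ), |y| < ρ → |c| - C ≤ φ c y := by
    intro c y hy
    refine le_ciInf fun x => ?_
    have hmem := mem_strip ρ x y hy
    have h1 : ‖v ((x:ℝ) + y * I)‖ ≤ C := hCb _ hmem
    have h2 : ‖(c:ℂ)‖ - ‖v ((x:ℝ) + y * I)‖ ≤
        ‖(c:ℂ) - v ((x:ℝ) + y * I)‖ := by
      exact (norm_sub_norm_le _ _)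
    rw [Complex.norm_real, Real.norm_eq_abs] at h2
    rw [norm_sub_rev]
    linarith
  -- positivity of φ when v avoids c on the line
  have hφ_pos : ∀ (c y : ℝ), y ∈ Set.Icc (δ/2) δ →
      (∀ x ∈ Set.Icc (0:ℝ) 1, v ((x:ℝ) + y * I) ≠ (c:ℂ)) → 0 < φ c y := by
    intro c y hy hne
    have hcont : ContinuousOn (fun x : ℝ => ‖v ((x:ℝ) + y * I) - (c:ℂ)‖)
        (Set.Icc 0 1) := by
      have hline : Continuous fun x : ℝ => (x : ℂ) + y * I := by fun_prop
      have hmaps : Set.MapsTo (fun x : ℝ => (x : ℂ) + y * I) (Set.Icc 0 1)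
          {z : ℂ | |z.im| < ρ} := fun x _ => mem_strip ρ x y (hyρ y hy)
      exact continuous_norm.comp_continuousOn
        (((hv_holo.continuousOn.comp hline.continuousOn hmaps).sub continuousOn_const))
    obtain ⟨x₀, hx₀, hmin⟩ := (isCompact_Icc (a := (0:ℝ)) (b := 1)).exists_isMinOn
      ⟨0, by norm_num⟩ hcont
    have hpos : 0 < ‖v ((x₀:ℝ) + y * I) - (c:ℂ)‖ := by
      rw [norm_pos_iff, sub_ne_zero]
      exact hne x₀ hx₀
    have : ‖v ((x₀:ℝ) + y * I) - (c:ℂ)‖ ≤ φ c y :=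
      le_ciInf fun x => isMinOn_iff.mp hmin x x.2
    linarith
  -- truncated versions
  set ψ : ℝ → ℝ → ℝ := fun c y => min (φ c y) 1 with hψ
  have hψ_nonneg : ∀ (c y : ℝ), 0 ≤ ψ c y := fun c y => le_min (hφ_nonneg c y) zero_le_one
  have hψ_le_one : ∀ (c y : ℝ), ψ c y ≤ 1 := fun c y => min_le_right _ _
  have hψ_lip : ∀ (c c' y : ℝ) (d : ℝ), |c - c'| ≤ d → ψ c y ≤ ψ c' y + d := by
    intro c c' y d hd
    have h1 := hφ_lip c c' y
    have habs : (0:ℝ) ≤ d := le_trans (abs_nonneg _) hd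
    have : ψ c y ≤ min (φ c' y + d) (1 + d) :=
      le_min ((min_le_left _ _).trans (by linarith)) ((min_le_right _ _).trans (by linarith))
    rcases le_total (φ c' y) 1 with h | h
    · rw [hψ]; simp only
      rw [min_eq_left h]
      exact this.trans (min_le_left _ _)
    · rw [hψ]; simp only
      rw [min_eq_right h]
      exact this.trans (min_le_right _ _)
  set m : (Fin k → ℝ) → ℝ → ℝ := fun E y => ⨅ j : Fin k, ψ (E j) y with hm
  have hmbdd : ∀ (E : Fin k → ℝ) (y : ℝ),
      BddBelow (Set.range fun j : Fin k => ψ (E j) y) :=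
    fun E y => ⟨0, fun t ⟨j, hj⟩ => hj ▸ hψ_nonneg _ _⟩
  have hm_le : ∀ (E : Fin k → ℝ) (y : ℝ) (j : Fin k), m E y ≤ ψ (E j) y :=
    fun E y j => ciInf_le (hmbdd E y) j
  have hm_le_one : ∀ (E : Fin k → ℝ) (y : ℝ), m E y ≤ 1 :=
    fun E y => (hm_le E y (Classical.arbitrary _)).trans (hψ_le_one _ _)
  have hm_lip : ∀ (E E' : Fin k → ℝ) (y : ℝ), m E y ≤ m E' y + dist E E' := by
    intro E E' y
    have h1 : ∀ j : Fin k, m E y - dist E E' ≤ ψ (E' j) y := by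
      intro j
      have h2 : |E j - E' j| ≤ dist E E' := by
        rw [← Real.dist_eq]
        exact dist_le_pi_dist E E' j
      have := (hm_le E y j).trans (hψ_lip (E j) (E' j) y _ h2)
      linarith
    have h3 : m E y - dist E E' ≤ m E' y := le_ciInf h1
    linarith
  set H : (Fin k → ℝ) → ℝ := fun E => ⨆ y : Set.Icc (δ/2) δ, m E (y:ℝ) with hH
  have hHbdd : ∀ E : Fin k → ℝ,
      BddAbove (Set.range fun y : Set.Icc (δ/2) δ => m E (y:ℝ)) :=
    fun E => ⟨1, fun t ⟨y, hy⟩ => hy ▸ hm_le_one _ _⟩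
  have hH_ge : ∀ (E : Fin k → ℝ) (y : Set.Icc (δ/2) δ), m E (y:ℝ) ≤ H E :=
    fun E y => le_ciSup (hHbdd E) y
  have hH_lip : ∀ E E' : Fin k → ℝ, H E ≤ H E' + dist E E' := by
    intro E E'
    refine ciSup_le fun y => ?_
    exact (hm_lip E E' y).trans (by linarith [hH_ge E' y])
  have hH_cont : Continuous H := by
    have : LipschitzWith 1 H := by
      refine LipschitzWith.of_dist_le_mul fun E E' => ?_
      rw [NNReal.coe_one, one_mul, Real.dist_eq, abs_sub_le_iff]
      constructor
      · linarith [hH_lip E E']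
      · rw [dist_comm]; linarith [hH_lip E' E]
    exact this.continuous
  have hH_pos : ∀ E : Fin k → ℝ, 0 < H E := by
    intro E
    obtain ⟨y, hy, hne⟩ := key_lemma ρ hρ v hv_holo hv_nonconst δ hδ0 hδρ k (fun j => (E j : ℂ))
    have hpos : ∀ j : Fin k, 0 < ψ (E j) y :=
      fun j => lt_min (hφ_pos (E j) y hy fun x hx => hne j x hx) one_pos
    obtain ⟨j₀, hj₀⟩ := Finite.exists_min fun j : Fin k => ψ (E j) y
    have h1 : ψ (E j₀) y ≤ m E y := le_ciInf hj₀
    exact lt_of_lt_of_le (lt_of_lt_of_le (hpos j₀) h1) (hH_ge E ⟨y, hy⟩)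
  -- compact minimisation over the cube
  set K : Set (Fin k → ℝ) := Set.Icc (fun _ => -(C+1)) (fun _ => C+1) with hK
  have hKc : IsCompact K := isCompact_Icc
  have hKne : K.Nonempty := ⟨fun _ => 0, by
    rw [hK, Set.mem_Icc]
    refine ⟨fun j => by show -(C+1) ≤ (0:ℝ); linarith, fun j => by show (0:ℝ) ≤ C+1; linarith⟩⟩
  obtain ⟨E₀, hE₀K, hE₀min⟩ := hKc.exists_isMinOn hKne hH_cont.continuousOn
  set ε₀ : ℝ := H E₀ with hε₀
  have hε₀pos : 0 < ε₀ := hH_pos E₀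
  refine ⟨min ε₀ 1 / 2, by positivity, fun E => ?_⟩
  set ε : ℝ := min ε₀ 1 / 2 with hε
  have hε1 : ε < 1 := by
    have : min ε₀ 1 ≤ 1 := min_le_right _ _
    rw [hε]; linarith
  have hεε₀ : ε < ε₀ := by
    have h1 : min ε₀ 1 ≤ ε₀ := min_le_left _ _
    have h2 : 0 < min ε₀ 1 := lt_min hε₀pos one_pos
    rw [hε]; linarith
  -- clamp E into the cube
  set E' : Fin k → ℝ := fun j => max (-(C+1)) (min (C+1) (E j)) with hE'
  have hE'K : E' ∈ K := by
    rw [hK, Set.mem_Icc]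
    exact ⟨fun j => le_max_left _ _,
      fun j => max_le (by show -(C+1) ≤ C+1; linarith) (min_le_left _ _)⟩
  have hHE' : ε < H E' := lt_of_lt_of_le hεε₀ (hE₀min hE'K)
  obtain ⟨y, hy⟩ := exists_lt_of_lt_ciSup hHE'
  refine ⟨(y:ℝ), y.2, fun j => ?_⟩
  have hjψ : ε < ψ (E' j) (y:ℝ) := lt_of_lt_of_le hy (hm_le E' (y:ℝ) j)
  have hjφ : ε < φ (E' j) (y:ℝ) := lt_of_lt_of_le hjψ (min_le_left _ _)
  rcases le_or_gt (|E j|) (C+1) with hsmall | hbig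
  · have : E' j = E j := by
      rw [abs_le] at hsmall
      rw [hE']
      simp only
      rw [min_eq_right hsmall.2, max_eq_right hsmall.1]
    rw [← this]
    exact hjφ
  · have h1 : (1:ℝ) < |E j| - C := by linarith
    have h2 := hφ_lower (E j) (y:ℝ) (hyρ _ y.2)
    calc ε < 1 := hε1
      _ < |E j| - C := h1
      _ ≤ φ (E j) (y:ℝ) := h2
end

section
/- Let N ≥ 1 and let a₁, …, a_N ∈ ℂ satisfy |a_k| ≥ 2 for every k. Let M = ∏_{k=N}^{1} [[a_k, −1], [1, 0]] (the product taken with the factor k = N leftmost). Then the (1,1) entry of M satisfies |M₁₁| ≥ ∏_{k=1}^{N} (|a_k| − 1); in particular the operator norm satisfies ‖M‖ ≥ ∏_{k=1}^{N} (|a_k| − 1). -/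
open Complex

/-- Operator norm of a 2×2 complex matrix. -/
noncomputable def opNorm2 (M : Matrix (Fin 2) (Fin 2) ℂ) : ℝ :=
  ‖Matrix.toEuclideanCLM (𝕜 := ℂ) (n := Fin 2) M‖

lemma euclidean_coord_le_norm (x : EuclideanSpace ℂ (Fin 2)) (i : Fin 2) :
    ‖x i‖ ≤ ‖x‖ := by
  rw [EuclideanSpace.norm_eq]
  have h1 : ‖x i‖ ^ 2 ≤ ∑ j, ‖x j‖ ^ 2 :=
    Finset.single_le_sum (f := fun j => ‖x j‖ ^ 2) (fun j _ => sq_nonneg _) (Finset.mem_univ i)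
  exact (Real.le_sqrt (norm_nonneg _) (Finset.sum_nonneg fun j _ => sq_nonneg _)).mpr h1

lemma entry_le_opNorm2 (M : Matrix (Fin 2) (Fin 2) ℂ) (i j : Fin 2) :
    ‖M i j‖ ≤ opNorm2 M := by
  have h := (Matrix.toEuclideanCLM (𝕜 := ℂ) (n := Fin 2) M).le_opNorm
    ((WithLp.equiv 2 _).symm (Pi.single j 1))
  have hnorm : ‖(WithLp.equiv 2 (Fin 2 → ℂ)).symm (Pi.single j 1)‖ = 1 := by
    simpa using EuclideanSpace.norm_single (𝕜 := ℂ) (n := Fin 2) j 1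
  rw [hnorm, mul_one] at h
  refine le_trans ?_ h
  have hx : (Matrix.toEuclideanCLM (𝕜 := ℂ) (n := Fin 2) M
      ((WithLp.equiv 2 _).symm (Pi.single j 1))) i = M i j := by
    rw [WithLp.equiv_symm_apply, Matrix.toEuclideanCLM_toLp]
    simp [Matrix.toLin'_apply, Matrix.mulVec_single]
  calc ‖M i j‖ = ‖(Matrix.toEuclideanCLM (𝕜 := ℂ) (n := Fin 2) M
        ((WithLp.equiv 2 _).symm (Pi.single j 1))) i‖ := by rw [hx]
    _ ≤ _ := euclidean_coord_le_norm _ i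

lemma list_range_prod {M : Type*} [CommMonoid M] (f : ℕ → M) (n : ℕ) :
    ((List.range n).map f).prod = ∏ j ∈ Finset.range n, f j := by
  induction n with
  | zero => simp
  | succ n ih =>
    rw [List.range_succ, List.map_append, List.prod_append, Finset.prod_range_succ, ih]
    simp

lemma transfer_list_bound (l : List ℂ) (h : ∀ x ∈ l, 2 ≤ ‖x‖) :
    (l.map (fun x => ‖x‖ - 1)).prod ≤
      ‖((l.map (fun x => !![x, -1; 1, 0])).prod) 0 0‖ ∧
    ‖((l.map (fun x => !![x, -1; 1, 0])).prod) 1 0‖ ≤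
      ‖((l.map (fun x => !![x, -1; 1, 0])).prod) 0 0‖ := by
  induction l with
  | nil => simp
  | cons x t ih =>
    obtain ⟨ih1, ih2⟩ := ih (fun y hy => h y (List.mem_cons_of_mem _ hy))
    have hx : 2 ≤ ‖x‖ := h x (List.mem_cons_self)
    set Q := ((t.map (fun x => !![x, -1; 1, 0])).prod) with hQ
    have hprodnn : (0:ℝ) ≤ (t.map (fun x => ‖x‖ - 1)).prod := by
      apply List.prod_nonneg
      intro y hy
      obtain ⟨z, hz, rfl⟩ := List.mem_map.mp hy
      have := h z (List.mem_cons_of_mem _ hz)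
      linarith
    have e00 : ((x :: t).map (fun x => !![x, -1; 1, 0])).prod 0 0
        = x * Q 0 0 - Q 1 0 := by
      simp [Matrix.mul_apply, Fin.sum_univ_two, hQ]
      ring
    have e10 : ((x :: t).map (fun x => !![x, -1; 1, 0])).prod 1 0 = Q 0 0 := by
      simp [Matrix.mul_apply, Fin.sum_univ_two, hQ]
    have key : (‖x‖ - 1) * ‖Q 0 0‖
        ≤ ‖x * Q 0 0 - Q 1 0‖ := by
      have h1 : ‖x‖ * ‖Q 0 0‖ - ‖Q 1 0‖
          ≤ ‖x * Q 0 0 - Q 1 0‖ := by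
        have := norm_sub_norm_le (x * Q 0 0) (Q 1 0)
        simpa [norm_mul] using this
      nlinarith [norm_nonneg (Q 0 0)]
    have hQ00 : (t.map (fun x => ‖x‖ - 1)).prod ≤ ‖Q 0 0‖ := ih1
    constructor
    · rw [e00, List.map_cons, List.prod_cons]
      calc (‖x‖ - 1) * (t.map (fun x => ‖x‖ - 1)).prod
          ≤ (‖x‖ - 1) * ‖Q 0 0‖ := by
            apply mul_le_mul_of_nonneg_left hQ00; linarith
        _ ≤ _ := key
    · rw [e00, e10]
      calc ‖Q 0 0‖ = 1 * ‖Q 0 0‖ := (one_mul _).symm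
        _ ≤ (‖x‖ - 1) * ‖Q 0 0‖ := by
            apply mul_le_mul_of_nonneg_right _ (norm_nonneg _); linarith
        _ ≤ _ := key

/-- If `|a_k| ≥ 2` for `1 ≤ k ≤ N` and `M = ∏_{k=N}^{1} [[a_k, −1], [1, 0]]` (factor `k = N`
leftmost), then `|M₁₁| ≥ ∏_{k=1}^N (|a_k| − 1)`; in particular `‖M‖ ≥ ∏_{k=1}^N (|a_k| − 1)`. -/
theorem transfer_product_entry_lower_bound
    (N : ℕ) (hN : 1 ≤ N) (a : ℕ → ℂ) (ha : ∀ k, 1 ≤ k → k ≤ N → 2 ≤ ‖a k‖) :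
    let M : Matrix (Fin 2) (Fin 2) ℂ :=
      ((List.range N).map (fun j => !![a (N - j), -1; 1, 0])).prod
    (∏ k ∈ Finset.Icc 1 N, (‖a k‖ - 1)) ≤ ‖M 0 0‖ ∧
    (∏ k ∈ Finset.Icc 1 N, (‖a k‖ - 1)) ≤ opNorm2 M := by
  intro M
  set l : List ℂ := (List.range N).map (fun j => a (N - j)) with hl
  have hmem : ∀ x ∈ l, 2 ≤ ‖x‖ := by
    intro x hx
    obtain ⟨j, hj, rfl⟩ := List.mem_map.mp hx
    rw [List.mem_range] at hj
    exact ha (N - j) (by omega) (by omega)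
  have hM : M = (l.map (fun x => !![x, -1; 1, 0])).prod := by
    rw [hl, List.map_map]; rfl
  have hprod : (l.map (fun x => ‖x‖ - 1)).prod
      = ∏ k ∈ Finset.Icc 1 N, (‖a k‖ - 1) := by
    rw [hl, List.map_map, list_range_prod]
    refine Finset.prod_nbij' (fun j => N - j) (fun k => N - k) ?_ ?_ ?_ ?_ ?_
    · intro j hj; simp only [Finset.mem_range] at hj; simp only [Finset.mem_Icc]; omega
    · intro k hk; simp only [Finset.mem_Icc] at hk; simp only [Finset.mem_range]; omega
    · intro j hj; simp only [Finset.mem_range] at hj; show N - (N - j) = j; omega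
    · intro k hk; simp only [Finset.mem_Icc] at hk; show N - (N - k) = k; omega
    · intro j hj; rfl
  obtain ⟨h1, h2⟩ := transfer_list_bound l hmem
  rw [hprod] at h1
  rw [hM]
  refine ⟨h1, le_trans h1 ?_⟩
  rw [← hM]
  exact entry_le_opNorm2 M 0 0
end

section
/- Let ρ > 0 and let v be holomorphic and bounded on the strip S_ρ = {z ∈ ℂ : |Im z| < ρ}, 1-periodic (v(z+1) = v(z)), real-valued on ℝ, and not identically constant, with C_v = sup_{z ∈ S_ρ} |v(z)|. Fix q ∈ ℕ, set δ = ρ/100, and let ε > 0 be a constant (depending only on δ, q, v) such that for every q-tuple (E₁, …, E_q) ∈ ℝ^q one has sup_{δ/2 ≤ y ≤ δ} min_{1 ≤ j ≤ q} inf_{x ∈ [0,1]} |v(x + iy) − E_j| > ε. Let v₁ : ℤ → ℝ take at most q distinct values, let ω ∈ ℝ, and let λ > 5 C_v ε^{−1}. Then for every E ∈ ℝ there exists y₀ with δ/2 ≤ y₀ ≤ δ such that for every a ∈ ℝ and every N ≥ 1: ‖M_N(a + i y₀, E, ω)‖ ≥ (λ ε − 1)^N. -/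
open Complex

/-- Transfer matrix `M_N(z, E, ω) = ∏_{k=N}^{1} [[E − λ v(z + kω) − v₁(k), −1], [1, 0]]`,
with the factor `k = N` leftmost. -/
noncomputable def transferMatrix (v : ℂ → ℂ) (v1 : ℤ → ℝ) (lam E ω : ℝ) (N : ℕ) (z : ℂ) :
    Matrix (Fin 2) (Fin 2) ℂ :=
  ((List.range N).map (fun j =>
    let k : ℤ := (N : ℤ) - (j : ℤ)
    !![(E : ℂ) - lam * v (z + (k : ℂ) * ω) - v1 k, -1; 1, 0])).prod

/-- Column norm is at most the operator norm. -/
lemma col_le_opNorm2 (M : Matrix (Fin 2) (Fin 2) ℂ) (j : Fin 2) :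
    Real.sqrt (‖M 0 j‖ ^ 2 + ‖M 1 j‖ ^ 2) ≤ opNorm2 M := by
  have h := (Matrix.toEuclideanCLM (𝕜 := ℂ) (n := Fin 2) M).le_opNorm
    ((WithLp.equiv 2 _).symm (Pi.single j 1))
  have hx : ‖(WithLp.equiv 2 (Fin 2 → ℂ)).symm (Pi.single j 1)‖ = 1 := by
    rw [show (WithLp.equiv 2 (Fin 2 → ℂ)).symm (Pi.single j 1)
      = EuclideanSpace.single j (1:ℂ) from rfl, EuclideanSpace.norm_single]
    norm_num
  rw [hx, mul_one] at h
  change ‖WithLp.toLp 2 (Matrix.toLin' M (Pi.single j 1))‖ ≤ _ at h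
  have hmv : Matrix.toLin' M (Pi.single j 1) = fun i => M i j := by
    rw [Matrix.toLin'_apply]
    funext i
    simp [Matrix.mulVec_single]
  rw [hmv] at h
  refine le_trans (le_of_eq ?_) h
  rw [EuclideanSpace.norm_eq]
  congr 1
  simp [Fin.sum_univ_two]

lemma entry00_le_opNorm2 (M : Matrix (Fin 2) (Fin 2) ℂ) :
    ‖M 0 0‖ ≤ opNorm2 M := by
  refine le_trans ?_ (col_le_opNorm2 M 0)
  calc ‖M 0 0‖ = Real.sqrt (‖M 0 0‖ ^ 2) :=
        (Real.sqrt_sq (norm_nonneg _)).symm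
    _ ≤ _ := Real.sqrt_le_sqrt (by nlinarith [norm_nonneg (M 1 0)])

/-- A 2×2 matrix with determinant 1 has operator norm at least 1. -/
lemma one_le_opNorm2_of_det_one (M : Matrix (Fin 2) (Fin 2) ℂ) (h : M.det = 1) :
    1 ≤ opNorm2 M := by
  set a := ‖M 0 0‖
  set b := ‖M 0 1‖
  set c := ‖M 1 0‖
  set d := ‖M 1 1‖
  have ha : 0 ≤ a := norm_nonneg _
  have hb : 0 ≤ b := norm_nonneg _
  have hc : 0 ≤ c := norm_nonneg _
  have hd : 0 ≤ d := norm_nonneg _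
  have hdet : (1 : ℝ) ≤ a * d + b * c := by
    have h2 : ‖M 0 0 * M 1 1 - M 0 1 * M 1 0‖ = 1 := by
      rw [← Matrix.det_fin_two M, h]; simp
    calc (1:ℝ) = ‖M 0 0 * M 1 1 - M 0 1 * M 1 0‖ := h2.symm
      _ ≤ ‖M 0 0 * M 1 1‖ + ‖M 0 1 * M 1 0‖ :=
          norm_sub_le _ _
      _ = a * d + b * c := by rw [norm_mul, norm_mul]
  have h0 := col_le_opNorm2 M 0
  have h1 := col_le_opNorm2 M 1
  set s := Real.sqrt (a ^ 2 + c ^ 2) with hs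
  set t := Real.sqrt (b ^ 2 + d ^ 2) with ht
  have hs2 : s ^ 2 = a ^ 2 + c ^ 2 := Real.sq_sqrt (by positivity)
  have ht2 : t ^ 2 = b ^ 2 + d ^ 2 := Real.sq_sqrt (by positivity)
  have hsn : 0 ≤ s := Real.sqrt_nonneg _
  have htn : 0 ≤ t := Real.sqrt_nonneg _
  have hcs : a * d + b * c ≤ s * t := by
    nlinarith [sq_nonneg (a * b - c * d), sq_nonneg (s * t), sq_nonneg (s - t),
      mul_nonneg hsn htn, sq_nonneg (a*d + b*c - s*t)]
  have hN : 0 ≤ opNorm2 M := norm_nonneg _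
  nlinarith [mul_le_mul h0 h1 htn hN]

lemma det_list_prod_one (L : List (Matrix (Fin 2) (Fin 2) ℂ))
    (h : ∀ A ∈ L, A.det = 1) : L.prod.det = 1 := by
  induction L with
  | nil => simp
  | cons A L ih =>
    rw [List.prod_cons, Matrix.det_mul, h A (List.mem_cons_self),
      ih (fun B hB => h B (List.mem_cons_of_mem _ hB))]
    ring

/-- Growth lemma: product of matrices `!![d, -1; 1, 0]` with `|d| ≥ D ≥ 2`. -/
lemma growth_lemma (D : ℝ) (hD : 2 ≤ D) (L : List (Matrix (Fin 2) (Fin 2) ℂ))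
    (h : ∀ A ∈ L, ∃ d : ℂ, A = !![d, -1; 1, 0] ∧ D ≤ ‖d‖) :
    (D - 1) ^ L.length ≤ ‖L.prod 0 0‖ ∧
      ‖L.prod 1 0‖ ≤ ‖L.prod 0 0‖ := by
  induction L with
  | nil => simp [Matrix.one_apply]
  | cons A L ih =>
    obtain ⟨d, rfl, hd⟩ := h A (List.mem_cons_self)
    obtain ⟨h1, h2⟩ := ih (fun B hB => h B (List.mem_cons_of_mem _ hB))
    rw [List.prod_cons]
    set P := L.prod with hP
    have e00 : ((!![d, -1; 1, 0] : Matrix (Fin 2) (Fin 2) ℂ) * P) 0 0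
        = d * P 0 0 - P 1 0 := by
      simp [Matrix.mul_apply, Fin.sum_univ_two]; ring
    have e10 : ((!![d, -1; 1, 0] : Matrix (Fin 2) (Fin 2) ℂ) * P) 1 0 = P 0 0 := by
      simp [Matrix.mul_apply, Fin.sum_univ_two]
    have habs : (D - 1) * ‖P 0 0‖ ≤ ‖d * P 0 0 - P 1 0‖ := by
      have hsub : ‖d * P 0 0‖ - ‖P 1 0‖
          ≤ ‖d * P 0 0 - P 1 0‖ := by
        simpa using
          norm_sub_norm_le (d * P 0 0) (P 1 0)
      rw [norm_mul] at hsub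
      have hP0 : 0 ≤ ‖P 0 0‖ := norm_nonneg _
      nlinarith [hd, h2, hP0]
    have hpow : (0:ℝ) < D - 1 := by linarith
    have hP00 : (D - 1) ^ L.length ≤ ‖P 0 0‖ := h1
    constructor
    · rw [e00, List.length_cons, pow_succ']
      calc (D - 1) * (D - 1) ^ L.length ≤ (D - 1) * ‖P 0 0‖ := by
            exact mul_le_mul_of_nonneg_left hP00 (le_of_lt hpow)
        _ ≤ _ := habs
    · rw [e00, e10]
      have : ‖P 0 0‖ ≤ (D - 1) * ‖P 0 0‖ := by
        nlinarith [norm_nonneg (P 0 0)]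
      linarith [habs]

lemma v_per_int {ρ : ℝ} {v : ℂ → ℂ} (hv : ∀ z : ℂ, |z.im| < ρ → v (z + 1) = v z)
    (z : ℂ) (hz : |z.im| < ρ) : ∀ n : ℤ, v (z + n) = v z := by
  intro n
  induction n using Int.induction_on with
  | zero => simp
  | succ n ih =>
    have him : |(z + (n : ℂ)).im| < ρ := by simpa using hz
    have h := hv (z + (n : ℂ)) him
    calc v (z + ((n : ℤ) + 1 : ℤ)) = v ((z + (n : ℂ)) + 1) := by push_cast; ring_nf
      _ = v (z + (n : ℂ)) := h
      _ = v z := by simpa using ih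
  | pred n ih =>
    have him : |(z + (-(n : ℂ) - 1)).im| < ρ := by simpa using hz
    have h := hv (z + (-(n : ℂ) - 1)) him
    calc v (z + (-(n : ℤ) - 1 : ℤ)) = v (z + (-(n : ℂ) - 1)) := by push_cast; ring_nf
      _ = v ((z + (-(n : ℂ) - 1)) + 1) := h.symm
      _ = v (z + (-(n : ℤ) : ℤ)) := by push_cast; ring_nf
      _ = v z := ih

/-- Growth of the transfer matrices on a horizontal line: with `δ = ρ/100` and `ε > 0` as in
the line-bound lemma for `q`-tuples, a background taking at most `q` values, and a coupling
`λ > 5 C_v / ε`, for every energy `E` there is a height `y₀ ∈ [δ/2, δ]` such that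
`‖M_N(a + i y₀, E, ω)‖ ≥ (λε − 1)^N` for all `a ∈ ℝ` and all `N ≥ 1`. -/
theorem transfer_matrix_growth_on_line
    (ρ : ℝ) (hρ : 0 < ρ) (v : ℂ → ℂ)
    (hv_holo : DifferentiableOn ℂ v {z : ℂ | |z.im| < ρ})
    (hv_per : ∀ z : ℂ, |z.im| < ρ → v (z + 1) = v z)
    (hv_real : ∀ x : ℝ, (v (x : ℂ)).im = 0)
    (hv_nonconst : ¬ ∃ c : ℂ, ∀ z : ℂ, |z.im| < ρ → v z = c)
    (Cv : ℝ) (hCv : IsLUB ((fun z => ‖v z‖) '' {z : ℂ | |z.im| < ρ}) Cv)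
    (q : ℕ) (δ : ℝ) (hδ : δ = ρ / 100)
    (ε : ℝ) (hε : 0 < ε)
    (hε_line : ∀ E : Fin q → ℝ,
      ∃ y ∈ Set.Icc (δ / 2) δ, ∀ j : Fin q,
        ε < ⨅ x : Set.Icc (0:ℝ) 1, ‖v ((x : ℝ) + y * I) - (E j : ℂ)‖)
    (v1 : ℤ → ℝ) (hv1 : ∃ s : Finset ℝ, s.card ≤ q ∧ ∀ n : ℤ, v1 n ∈ s)
    (ω : ℝ) (lam : ℝ) (hlam : 5 * Cv * ε⁻¹ < lam) :
    ∀ E : ℝ, ∃ y₀ ∈ Set.Icc (δ / 2) δ, ∀ a : ℝ, ∀ N : ℕ, 1 ≤ N →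
      (lam * ε - 1) ^ N ≤
        opNorm2 (transferMatrix v v1 lam E ω N ((a : ℂ) + y₀ * I)) := by
  -- λ is positive
  have hCv0 : 0 ≤ Cv := by
    have h0 : ‖v 0‖ ≤ Cv := hCv.1 ⟨0, by simpa using hρ, rfl⟩
    exact le_trans (norm_nonneg _) h0
  have hlam0 : 0 < lam := by
    have : 0 ≤ 5 * Cv * ε⁻¹ := by positivity
    linarith
  intro E
  obtain ⟨s, hs_card, hs_mem⟩ := hv1
  set l := s.toList with hl
  have hlen : l.length = s.card := Finset.length_toList s
  set f : Fin q → ℝ := fun j => (E - l.getD j 0) / lam with hf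
  obtain ⟨y₀, hy₀, hy_line⟩ := hε_line f
  obtain ⟨hy₀1, hy₀2⟩ := hy₀
  have hδ0 : 0 < δ := by rw [hδ]; linarith
  have hy₀pos : 0 < y₀ := by linarith
  have hy₀ρ : |y₀| < ρ := by
    rw [abs_of_pos hy₀pos]; rw [hδ] at hy₀2; linarith
  refine ⟨y₀, ⟨hy₀1, hy₀2⟩, ?_⟩
  intro a N hN
  -- key entry bound
  have key : ∀ (x : ℝ) (k : ℤ),
      lam * ε ≤ ‖(E : ℂ) - lam * v ((x : ℂ) + y₀ * I) - v1 k‖ := by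
    intro x k
    -- find the index j with f j = (E - v1 k)/lam
    have hmem : v1 k ∈ l := Finset.mem_toList.mpr (hs_mem k)
    obtain ⟨n, hn⟩ := List.mem_iff_get.mp hmem
    have hnq : (n : ℕ) < q := lt_of_lt_of_le (hlen ▸ n.isLt) hs_card
    set j : Fin q := ⟨n, hnq⟩ with hj
    have hfj : f j = (E - v1 k) / lam := by
      have hg : l.getD (↑n) 0 = v1 k := by
        rw [List.getD_eq_getElem l 0 n.isLt, ← hn, List.get_eq_getElem]
      simp only [hf, hj]
      rw [hg]
    -- periodicity
    have hper : v ((x : ℂ) + y₀ * I) = v (((Int.fract x : ℝ) : ℂ) + y₀ * I) := by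
      have h2 : Int.fract x + (⌊x⌋ : ℝ) = x := Int.fract_add_floor x
      have h3 : ((Int.fract x : ℝ) : ℂ) + ((⌊x⌋ : ℤ) : ℂ) = (x : ℂ) := by
        push_cast
        exact_mod_cast congrArg (fun t : ℝ => (t : ℂ)) h2
      have heq : (x : ℂ) + y₀ * I
          = (((Int.fract x : ℝ) : ℂ) + y₀ * I) + ((⌊x⌋ : ℤ) : ℂ) := by
        rw [← h3]; ring
      rw [heq]
      exact v_per_int hv_per _ (by simpa using hy₀ρ) ⌊x⌋
    -- infimum bound
    have hnonempty : Nonempty (Set.Icc (0:ℝ) 1) := ⟨⟨0, by norm_num⟩⟩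
    have hbdd : BddBelow (Set.range fun x : Set.Icc (0:ℝ) 1 =>
        ‖v ((x : ℝ) + y₀ * I) - (f j : ℂ)‖) :=
      ⟨0, fun r ⟨x, hx⟩ => hx ▸ norm_nonneg _⟩
    have hfract : (Int.fract x : ℝ) ∈ Set.Icc (0:ℝ) 1 :=
      ⟨Int.fract_nonneg x, le_of_lt (Int.fract_lt_one x)⟩
    have hle := ciInf_le hbdd (⟨Int.fract x, hfract⟩ : Set.Icc (0:ℝ) 1)
    have hgt : ε < ‖v (((Int.fract x : ℝ) : ℂ) + y₀ * I) - (f j : ℂ)‖ :=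
      lt_of_lt_of_le (hy_line j) hle
    rw [← hper] at hgt
    -- rewrite the entry
    have hrw : (E : ℂ) - lam * v ((x : ℂ) + y₀ * I) - v1 k
        = (-(lam : ℂ)) * (v ((x : ℂ) + y₀ * I) - (f j : ℂ)) := by
      rw [hfj]
      have hlamne : (lam : ℂ) ≠ 0 := by
        exact_mod_cast ne_of_gt hlam0
      push_cast
      field_simp
      ring
    rw [hrw, norm_mul]
    have habs_lam : ‖-(lam : ℂ)‖ = lam := by
      rw [norm_neg, Complex.norm_real, Real.norm_eq_abs, abs_of_pos hlam0]
    rw [habs_lam]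
    exact mul_le_mul_of_nonneg_left (le_of_lt hgt) (le_of_lt hlam0)
  -- the list of factors
  set z : ℂ := (a : ℂ) + y₀ * I with hz
  set L : List (Matrix (Fin 2) (Fin 2) ℂ) := (List.range N).map (fun j =>
    let k : ℤ := (N : ℤ) - (j : ℤ)
    !![(E : ℂ) - lam * v (z + (k : ℂ) * ω) - v1 k, -1; 1, 0]) with hL
  have hLfact : ∀ A ∈ L, ∃ d : ℂ, A = !![d, -1; 1, 0] ∧ lam * ε ≤ ‖d‖ := by
    intro A hA
    rw [hL, List.mem_map] at hA
    obtain ⟨j, _, hA⟩ := hA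
    refine ⟨(E : ℂ) - lam * v (z + (((N : ℤ) - (j : ℤ) : ℤ) : ℂ) * ω)
      - v1 ((N : ℤ) - (j : ℤ)), hA.symm, ?_⟩
    have harg : z + (((N : ℤ) - (j : ℤ) : ℤ) : ℂ) * ω
        = ((a + ((N : ℤ) - (j : ℤ) : ℤ) * ω : ℝ) : ℂ) + y₀ * I := by
      rw [hz]; push_cast; ring
    rw [harg]
    exact key _ _
  have hLlen : L.length = N := by rw [hL]; simp [Function.comp_def]
  have hM : transferMatrix v v1 lam E ω N z = L.prod := rfl
  rcases le_or_gt (lam * ε) 2 with hle2 | hgt2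
  · -- trivial case : (λε - 1)^N ≤ 1 ≤ ‖M‖
    have hdet : L.prod.det = 1 := by
      apply det_list_prod_one
      intro A hA
      obtain ⟨d, rfl, _⟩ := hLfact A hA
      rw [Matrix.det_fin_two_of]
      ring
    have h1 : (1:ℝ) ≤ opNorm2 (transferMatrix v v1 lam E ω N z) := by
      rw [hM]
      exact one_le_opNorm2_of_det_one _ hdet
    have hlamε : 0 < lam * ε := mul_pos hlam0 hε
    have hb : |lam * ε - 1| ≤ 1 := by
      rw [abs_le]; constructor <;> linarith
    calc (lam * ε - 1) ^ N ≤ |(lam * ε - 1) ^ N| := le_abs_self _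
      _ = |lam * ε - 1| ^ N := by rw [_root_.abs_pow]
      _ ≤ 1 ^ N := pow_le_pow_left₀ (abs_nonneg _) hb N
      _ = 1 := one_pow N
      _ ≤ _ := h1
  · -- growth case
    obtain ⟨h1, h2⟩ := growth_lemma (lam * ε) (le_of_lt hgt2) L hLfact
    rw [hLlen] at h1
    calc (lam * ε - 1) ^ N ≤ ‖L.prod 0 0‖ := h1
      _ ≤ opNorm2 L.prod := entry00_le_opNorm2 _
      _ = _ := by rw [hM]
end
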